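/- arXiv:1506.03467 — 8 statements merged into one kernel-verified Lean document; each statement's English description precedes it below -/
import Mathlib

section
/- If (a_n) is a sequence of positive rationals with a_n → 0 and Σ a_n = ∞, then for every positive real x there is a subsequence (a_{n_k}) with Σ_k a_{n_k} = x. -/
/-!
Choose terms greedily: walk through the sequence and take `a n` whenever it still fits strictly
below `x`. The chosen partial sums stay below `x`, so the chosen series converges to some
`L ≤ x`. If `L < x`, then, as `a n → 0`, every late term fits, so the chosen series differs from
`∑ a n` in finitely many terms only and `∑ a n` would converge. Hence `L = x`, and infinitely many
terms are chosen because the partial sums stay strictly below their limit.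
-/

open Filter Finset Topology

theorem Set.Infinite.hasSum_comp_nth_iff {α : Type*} [AddCommMonoid α] [TopologicalSpace α]
    {S : Set ℕ} (hS : S.Infinite) {f : ℕ → α} {s : α} :
    HasSum (f ∘ Nat.nth (· ∈ S)) s ↔ HasSum (S.indicator f) s := by
  have hcomp : S.indicator f ∘ Nat.nth (· ∈ S) = f ∘ Nat.nth (· ∈ S) :=
    funext fun k => Set.indicator_of_mem (Nat.nth_mem_of_infinite hS k) f
  rw [← hcomp]
  refine (Nat.nth_injective hS).hasSum_iff fun n hn => Set.indicator_of_notMem ?_ f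
  rwa [Nat.range_nth_of_infinite hS] at hn

noncomputable def greedyPartialSum (a : ℕ → ℝ) (x : ℝ) : ℕ → ℝ
  | 0 => 0
  | n + 1 => greedyPartialSum a x n + if a n < x - greedyPartialSum a x n then a n else 0

def greedySelected (a : ℕ → ℝ) (x : ℝ) : Set ℕ :=
  {n | a n < x - greedyPartialSum a x n}

section Greedy

variable {a : ℕ → ℝ} {x : ℝ}

theorem greedyPartialSum_eq_sum_indicator (n : ℕ) :
    greedyPartialSum a x n = ∑ i ∈ range n, (greedySelected a x).indicator a i := by
  induction n with
  | zero => rfl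
  | succ n ih =>
    rw [sum_range_succ, ← ih, greedyPartialSum]
    simp only [Set.indicator_apply, greedySelected, Set.mem_ofPred_eq]

theorem greedyPartialSum_lt (hx : 0 < x) (n : ℕ) : greedyPartialSum a x n < x := by
  induction n with
  | zero => exact hx
  | succ n ih =>
    rw [greedyPartialSum]
    split_ifs <;> linarith

theorem hasSum_indicator_greedySelected (ha : ∀ n, 0 ≤ a n) (hnull : Tendsto a atTop (𝓝 0))
    (hdiv : ¬Summable a) (hx : 0 < x) : HasSum ((greedySelected a x).indicator a) x := by
  set f := (greedySelected a x).indicator a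
  have hf : ∀ n, 0 ≤ f n := Set.indicator_nonneg fun n _ => ha n
  have hbound : ∀ n, ∑ i ∈ range n, f i ≤ x := fun n =>
    (greedyPartialSum_eq_sum_indicator n ▸ greedyPartialSum_lt hx n).le
  have hsum : Summable f := summable_of_sum_range_le hf hbound
  suffices x ≤ ∑' n, f n by
    simpa only [le_antisymm (Real.tsum_le_of_sum_range_le hf hbound) this] using hsum.hasSum
  by_contra! hlt
  refine hdiv (hsum.congr_atTop ?_)
  filter_upwards [hnull.eventually (gt_mem_nhds (sub_pos.2 hlt))] with n hn
  have hle : greedyPartialSum a x n ≤ ∑' n, f n :=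
    greedyPartialSum_eq_sum_indicator n ▸ hsum.sum_le_tsum _ fun i _ => hf i
  have hsel : n ∈ greedySelected a x := show a n < x - greedyPartialSum a x n by linarith
  exact Set.indicator_of_mem hsel a

theorem greedySelected_infinite (hx : 0 < x) (h : HasSum ((greedySelected a x).indicator a) x) :
    (greedySelected a x).Infinite := by
  intro hfin
  obtain ⟨N, hN⟩ := hfin.bddAbove
  have hN_sum : HasSum ((greedySelected a x).indicator a) (greedyPartialSum a x (N + 1)) := by
    rw [greedyPartialSum_eq_sum_indicator]
    refine hasSum_sum_of_ne_finset_zero fun n hn => Set.indicator_of_notMem (fun hS => hn ?_) a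
    exact mem_range.2 (Nat.lt_succ_of_le (hN hS))
  exact (greedyPartialSum_lt hx _).ne (hN_sum.unique h)

end Greedy

theorem exists_strictMono_hasSum_comp_of_not_summable {a : ℕ → ℝ} (ha : ∀ n, 0 ≤ a n)
    (hnull : Tendsto a atTop (𝓝 0)) (hdiv : ¬Summable a) {x : ℝ} (hx : 0 < x) :
    ∃ φ : ℕ → ℕ, StrictMono φ ∧ HasSum (a ∘ φ) x := by
  have h := hasSum_indicator_greedySelected ha hnull hdiv hx
  have hinf := greedySelected_infinite hx h
  exact ⟨_, Nat.nth_strictMono hinf, hinf.hasSum_comp_nth_iff.2 h⟩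

theorem pintilie_representation (a : ℕ → ℚ)
    (hpos : ∀ n, 0 < a n)
    (hnull : Filter.Tendsto a Filter.atTop (nhds 0))
    (hdiv : Filter.Tendsto (fun N => ∑ n ∈ Finset.range N, (a n : ℝ))
      Filter.atTop Filter.atTop) :
    ∀ x : ℝ, 0 < x → ∃ φ : ℕ → ℕ, StrictMono φ ∧
      HasSum (fun k => (a (φ k) : ℝ)) x := by
  have ha : ∀ n, 0 ≤ (a n : ℝ) := fun n => mod_cast (hpos n).le
  have hnull_real : Tendsto (fun n => (a n : ℝ)) atTop (𝓝 0) := by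
    simpa [Function.comp_def] using (Rat.continuous_coe_real.tendsto 0).comp hnull
  have hdiv_real : ¬Summable fun n => (a n : ℝ) :=
    (not_summable_iff_tendsto_nat_atTop_of_nonneg ha).2 hdiv
  exact fun x hx => exists_strictMono_hasSum_comp_of_not_summable ha hnull_real hdiv_real hx
end

section
/- A function f : ℤ → ℤ is a quasihomomorphism if the set {f(x+y) − f(x) − f(y) : x, y ∈ ℤ} is finite. If f and g are quasihomomorphisms, then so is their composition f ∘ g. -/
/-- A quasihomomorphism of ℤ. -/
def QuasiHom (f : ℤ → ℤ) : Prop :=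
  {z : ℤ | ∃ x y : ℤ, z = f (x + y) - f x - f y}.Finite

/-!
The defect of `g` at `(x, y)` takes one of finitely many values `d`, and
`g (x + y) = g x + g y + d`. Up to two defects of `f`, the defect of `f ∘ g` at `(x, y)` is
then `f d`, which is bounded because `f` takes only finitely many values on those `d`.
-/

theorem quasiHom_iff_exists_abs_le {f : ℤ → ℤ} :
    QuasiHom f ↔ ∃ C : ℤ, ∀ x y : ℤ, |f (x + y) - f x - f y| ≤ C := by
  constructor
  · intro hf
    obtain ⟨C, hC⟩ := (hf.image abs).bddAbove
    exact ⟨C, fun x y => hC ⟨_, ⟨x, y, rfl⟩, rfl⟩⟩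
  · rintro ⟨C, hC⟩
    refine (Set.finite_Icc (-C) C).subset ?_
    rintro z ⟨x, y, rfl⟩
    exact abs_le.mp (hC x y)

theorem abs_sub_sub_le_of_forall_abs_le {f : ℤ → ℤ} {C : ℤ}
    (hC : ∀ x y : ℤ, |f (x + y) - f x - f y| ≤ C) (a b c : ℤ) :
    |f c - f a - f b| ≤ C + C + |f (c - a - b)| := by
  have hc : a + b + (c - a - b) = c := by ring
  have h₁ := hC (a + b) (c - a - b)
  rw [hc] at h₁
  calc |f c - f a - f b|
      = |(f c - f (a + b) - f (c - a - b)) + (f (a + b) - f a - f b) + f (c - a - b)| := by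
        ring_nf
    _ ≤ |f c - f (a + b) - f (c - a - b)| + |f (a + b) - f a - f b| + |f (c - a - b)| :=
        abs_add_three _ _ _
    _ ≤ C + C + |f (c - a - b)| := by gcongr; exact hC a b

theorem quasiHom_comp (f g : ℤ → ℤ) (hf : QuasiHom f) (hg : QuasiHom g) :
    QuasiHom (f ∘ g) := by
  obtain ⟨Cf, hCf⟩ := quasiHom_iff_exists_abs_le.mp hf
  obtain ⟨Cg, hCg⟩ := quasiHom_iff_exists_abs_le.mp hg
  obtain ⟨B, hB⟩ := ((Set.finite_Icc (-Cg) Cg).image fun d => |f d|).bddAbove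
  refine quasiHom_iff_exists_abs_le.mpr ⟨Cf + Cf + B, fun x y => ?_⟩
  calc |f (g (x + y)) - f (g x) - f (g y)|
      ≤ Cf + Cf + |f (g (x + y) - g x - g y)| := abs_sub_sub_le_of_forall_abs_le hCf _ _ _
    _ ≤ Cf + Cf + B := by gcongr; exact hB ⟨_, abs_le.mp (hCg x y), rfl⟩
end

section
/- The relation f ∼ g iff {f(x) − g(x) : x ∈ ℤ} is finite is an equivalence relation on quasihomomorphisms ℤ → ℤ, and is compatible with composition: if f ∼ f' and g ∼ g' then f ∘ g ∼ f' ∘ g'. -/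
/-- Equivalence of quasihomomorphisms: bounded difference. -/
def QHEquiv (f g : ℤ → ℤ) : Prop :=
  {z : ℤ | ∃ x : ℤ, z = f x - g x}.Finite

namespace QHEquiv

theorem refl (f : ℤ → ℤ) : QHEquiv f f :=
  (Set.finite_singleton 0).subset <| by
    rintro z ⟨x, rfl⟩
    simp

theorem symm {f g : ℤ → ℤ} (h : QHEquiv f g) : QHEquiv g f :=
  (h.image Neg.neg).subset <| by
    rintro z ⟨x, rfl⟩
    exact ⟨f x - g x, ⟨x, rfl⟩, by ring⟩

theorem trans {f g h : ℤ → ℤ} (hfg : QHEquiv f g) (hgh : QHEquiv g h) : QHEquiv f h :=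
  (hfg.image2 (· + ·) hgh).subset <| by
    rintro z ⟨x, rfl⟩
    exact ⟨f x - g x, ⟨x, rfl⟩, g x - h x, ⟨x, rfl⟩, by ring⟩

theorem comp_right {f f' : ℤ → ℤ} (h : QHEquiv f f') (g : ℤ → ℤ) :
    QHEquiv (f ∘ g) (f' ∘ g) :=
  h.subset <| by
    rintro z ⟨x, rfl⟩
    exact ⟨g x, rfl⟩

/-- Writing `g x = g' x + d` with `d` in the finite set of differences,
`f (g x) - f (g' x)` is a defect of `f` plus `f d`. -/
theorem comp_left {f g g' : ℤ → ℤ} (hf : QuasiHom f) (h : QHEquiv g g') :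
    QHEquiv (f ∘ g) (f ∘ g') :=
  (hf.image2 (· + ·) (h.image f)).subset <| by
    rintro z ⟨x, rfl⟩
    refine ⟨f (g x) - f (g' x) - f (g x - g' x), ⟨g' x, g x - g' x, by ring_nf⟩,
      f (g x - g' x), ⟨g x - g' x, ⟨x, rfl⟩, rfl⟩, ?_⟩
    simp only [Function.comp_apply]
    ring

theorem comp {f f' g g' : ℤ → ℤ} (hf' : QuasiHom f') (hff' : QHEquiv f f')
    (hgg' : QHEquiv g g') : QHEquiv (f ∘ g) (f' ∘ g') :=
  (hff'.comp_right g).trans (comp_left hf' hgg')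

end QHEquiv

theorem quasiHom_equiv_and_comp_compat :
    Equivalence (fun f g : {f : ℤ → ℤ // QuasiHom f} => QHEquiv f.1 g.1) ∧
    ∀ f f' g g' : ℤ → ℤ, QuasiHom f → QuasiHom f' → QuasiHom g → QuasiHom g' →
      QHEquiv f f' → QHEquiv g g' → QHEquiv (f ∘ g) (f' ∘ g') :=
  ⟨⟨fun f => QHEquiv.refl f.1, QHEquiv.symm, QHEquiv.trans⟩,
    fun _ _ _ _ _ hf' _ _ hff' hgg' => QHEquiv.comp hf' hff' hgg'⟩
end

section
/- For any quasihomomorphism f : ℤ → ℤ, exactly one of the following holds: (1) f has bounded range; (2) for every C > 0 there exists n₀ with f(x) > C for all x > n₀; (3) for every C > 0 there exists n₀ with f(x) < −C for all x > n₀. -/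
/-!
A quasihomomorphism `f` has bounded defect `|f (x + y) - f x - f y| ≤ D`. If `f n > D` for some
`n > 0`, then every step of length `n` raises `f` by at least `f n - D ≥ 1`, so `f` grows at least
like `x / n` and tends to `+∞`; symmetrically `f n < -D` forces `f → -∞`. Otherwise `|f n| ≤ D`
for all `n > 0`, and `f (-n) ≈ f 0 - f n` bounds `f` on the negative integers too. The three
behaviours are mutually exclusive.
-/

open Filter

lemma Int.tendsto_ediv_const_atTop {n : ℤ} (hn : 0 < n) : Tendsto (· / n) atTop atTop :=
  tendsto_atTop_atTop.2 fun b => ⟨b * n, fun _ hx => Int.le_ediv_of_mul_le hn hx⟩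

theorem QuasiHom.exists_abs_defect_le {f : ℤ → ℤ} (hf : QuasiHom f) :
    ∃ D, ∀ x y, |f (x + y) - f x - f y| ≤ D := by
  obtain ⟨D, hD⟩ := (hf.image abs).bddAbove
  exact ⟨D, fun x y => hD ⟨_, ⟨x, y, rfl⟩, rfl⟩⟩

section Defect

variable {f : ℤ → ℤ} {D : ℤ}

lemma add_mul_le_apply_add_mul (hD : ∀ x y, f x + f y - D ≤ f (x + y)) (x n : ℤ) {k : ℤ}
    (hk : 0 ≤ k) : f x + k * (f n - D) ≤ f (x + k * n) := by
  induction k, hk using Int.leInduction with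
  | base => simp
  | succ k _ ih =>
    have := hD (x + k * n) n
    rw [show x + (k + 1) * n = x + k * n + n by ring]
    linarith

lemma tendsto_atTop_of_defect_lt_apply (hD : ∀ x y, f x + f y - D ≤ f (x + y)) {n : ℤ}
    (hn : 0 < n) (hfn : D < f n) : Tendsto f atTop atTop := by
  obtain ⟨m, hm⟩ := ((Set.finite_Ico 0 n).image f).bddBelow
  refine tendsto_atTop_mono' atTop ?_
    (tendsto_atTop_add_const_left _ m (Int.tendsto_ediv_const_atTop hn))
  filter_upwards [eventually_ge_atTop 0] with x hx
  have hq : 0 ≤ x / n := Int.ediv_nonneg hx hn.le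
  have hr : f (x % n) ∈ f '' Set.Ico 0 n :=
    ⟨_, ⟨Int.emod_nonneg x hn.ne', Int.emod_lt_of_pos x hn⟩, rfl⟩
  calc m + x / n ≤ f (x % n) + x / n * (f n - D) :=
        add_le_add (hm hr) (le_mul_of_one_le_right hq (by omega))
    _ ≤ f (x % n + x / n * n) := add_mul_le_apply_add_mul hD _ _ hq
    _ = f x := by rw [Int.emod_add_ediv_mul]

lemma exists_abs_le_of_abs_defect_le (hD : ∀ x y, |f (x + y) - f x - f y| ≤ D) {B : ℤ}
    (hB : ∀ n, 0 < n → |f n| ≤ B) : ∃ C, ∀ x, |f x| ≤ C := by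
  refine ⟨|f 0| + B + D, fun x => ?_⟩
  have hD0 : 0 ≤ D := (abs_nonneg _).trans (hD 0 0)
  have hB0 : 0 ≤ B := (abs_nonneg _).trans (hB 1 one_pos)
  rcases lt_trichotomy x 0 with hx | rfl | hx
  · have h0 := hD x (-x)
    rw [add_neg_cancel] at h0
    have hnx := hB (-x) (neg_pos.2 hx)
    rw [abs_le] at h0 hnx ⊢
    constructor <;> linarith [neg_abs_le (f 0), le_abs_self (f 0)]
  · linarith
  · linarith [hB x hx, abs_nonneg (f 0)]

end Defect

theorem QuasiHom.bounded_or_tendsto_atTop_or_tendsto_atBot {f : ℤ → ℤ} (hf : QuasiHom f) :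
    (∃ C, ∀ x, |f x| ≤ C) ∨ Tendsto f atTop atTop ∨ Tendsto f atTop atBot := by
  obtain ⟨D, hD⟩ := hf.exists_abs_defect_le
  have hlow : ∀ x y, f x + f y - D ≤ f (x + y) := fun x y => by
    linarith [(abs_le.1 (hD x y)).1]
  have hup : ∀ x y, -f x + -f y - D ≤ -f (x + y) := fun x y => by
    linarith [(abs_le.1 (hD x y)).2]
  by_cases htop : ∃ n, 0 < n ∧ D < f n
  · obtain ⟨n, hn, hfn⟩ := htop
    exact Or.inr (Or.inl (tendsto_atTop_of_defect_lt_apply hlow hn hfn))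
  by_cases hbot : ∃ n, 0 < n ∧ f n < -D
  · obtain ⟨n, hn, hfn⟩ := hbot
    exact Or.inr (Or.inr (tendsto_neg_atTop_iff.1
      (tendsto_atTop_of_defect_lt_apply (f := -f) hup hn (lt_neg_of_lt_neg hfn))))
  push Not at htop hbot
  exact Or.inl (exists_abs_le_of_abs_defect_le hD fun n hn => abs_le.2 ⟨hbot n hn, htop n hn⟩)

section Tendsto

variable {f : ℤ → ℤ}

lemma tendsto_atTop_atTop_iff_forall_pos_exists_forall_gt :
    Tendsto f atTop atTop ↔ ∀ C : ℤ, 0 < C → ∃ n₀ : ℤ, ∀ x > n₀, f x > C := by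
  rw [atTop_basis_Ioi.tendsto_iff (atTop_basis_Ioi' 0)]
  simp

lemma tendsto_atTop_atBot_iff_forall_pos_exists_forall_lt_neg :
    Tendsto f atTop atBot ↔ ∀ C : ℤ, 0 < C → ∃ n₀ : ℤ, ∀ x > n₀, f x < -C := by
  rw [← tendsto_neg_atTop_iff, atTop_basis_Ioi.tendsto_iff (atTop_basis_Ioi' 0)]
  simp [lt_neg]

lemma not_tendsto_atTop_of_abs_le {C : ℤ} (hC : ∀ x, |f x| ≤ C) : ¬Tendsto f atTop atTop :=
  fun h => not_bddAbove_of_tendsto_atTop h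
    ⟨C, Set.forall_mem_range.2 fun x => (le_abs_self _).trans (hC x)⟩

lemma not_tendsto_atBot_of_abs_le {C : ℤ} (hC : ∀ x, |f x| ≤ C) : ¬Tendsto f atTop atBot :=
  fun h => not_bddBelow_of_tendsto_atBot h
    ⟨-C, Set.forall_mem_range.2 fun x => neg_le_of_abs_le (hC x)⟩

end Tendsto

theorem quasiHom_trichotomy (f : ℤ → ℤ) (hf : QuasiHom f) :
    let P1 := ∃ C : ℤ, ∀ x : ℤ, |f x| ≤ C
    let P2 := ∀ C : ℤ, 0 < C → ∃ n₀ : ℤ, ∀ x > n₀, f x > C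
    let P3 := ∀ C : ℤ, 0 < C → ∃ n₀ : ℤ, ∀ x > n₀, f x < -C
    (P1 ∧ ¬P2 ∧ ¬P3) ∨ (¬P1 ∧ P2 ∧ ¬P3) ∨ (¬P1 ∧ ¬P2 ∧ P3) := by
  intro P1 P2 P3
  rw [show P2 ↔ Tendsto f atTop atTop from
      tendsto_atTop_atTop_iff_forall_pos_exists_forall_gt.symm,
    show P3 ↔ Tendsto f atTop atBot from
      tendsto_atTop_atBot_iff_forall_pos_exists_forall_lt_neg.symm]
  have h12 : P1 → ¬Tendsto f atTop atTop := fun ⟨_, hC⟩ => not_tendsto_atTop_of_abs_le hC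
  have h13 : P1 → ¬Tendsto f atTop atBot := fun ⟨_, hC⟩ => not_tendsto_atBot_of_abs_le hC
  have h23 : Tendsto f atTop atTop → ¬Tendsto f atTop atBot :=
    fun h => h.not_tendsto disjoint_atTop_atBot
  have := hf.bounded_or_tendsto_atTop_or_tendsto_atBot
  tauto
end

section
/- If a and b are distinct reals, then the quasihomomorphisms x ↦ ⌊ax⌋ and x ↦ ⌊bx⌋ are not equivalent, i.e., the set {⌊ax⌋ − ⌊bx⌋ : x ∈ ℤ} is infinite. -/
/- The difference ⌊ax⌋ - ⌊bx⌋ stays within distance 1 of (a - b)x, which is unbounded on ℤ when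
a ≠ b; a finite set of integers is bounded, so it cannot contain all these differences. -/

lemma abs_floor_sub_floor_sub_lt_one (u v : ℝ) : |((⌊u⌋ : ℝ) - ⌊v⌋) - (u - v)| < 1 := by
  have hu := Int.floor_le u
  have hu' := Int.lt_floor_add_one u
  have hv := Int.floor_le v
  have hv' := Int.lt_floor_add_one v
  rw [abs_sub_lt_iff]
  constructor <;> linarith

lemma exists_lt_abs_mul_intCast {c : ℝ} (hc : c ≠ 0) (M : ℝ) : ∃ x : ℤ, M < |c * x| := by
  obtain ⟨n, hn⟩ := exists_nat_gt (M / |c|)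
  refine ⟨n, ?_⟩
  rw [abs_mul, Int.cast_natCast, Nat.abs_cast, mul_comm]
  exact (div_lt_iff₀ (abs_pos.mpr hc)).mp hn

theorem floor_mul_not_equiv (a b : ℝ) (hab : a ≠ b) :
    {z : ℤ | ∃ x : ℤ, z = ⌊a * x⌋ - ⌊b * x⌋}.Infinite := by
  intro hfin
  obtain ⟨M, hM⟩ := (hfin.image abs).bddAbove
  obtain ⟨x, hx⟩ := exists_lt_abs_mul_intCast (sub_ne_zero.mpr hab) (M + 1)
  have hbound : (|⌊a * x⌋ - ⌊b * x⌋| : ℝ) ≤ M := by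
    exact_mod_cast hM ⟨_, ⟨x, rfl⟩, rfl⟩
  have hclose := abs_floor_sub_floor_sub_lt_one (a * x) (b * x)
  have htri := abs_sub_abs_le_abs_sub (a * x - b * x) ((⌊a * x⌋ : ℝ) - ⌊b * x⌋)
  rw [abs_sub_comm] at hclose
  rw [sub_mul] at hx
  linarith
end

section
/- Engel expansion: every real number A with 0 < A ≤ 1 can be written as A = Σ_{n=1}^∞ 1/(a_1 a_2 ⋯ a_n) where (a_n) is a sequence of integers with 2 ≤ a_n ≤ a_{n+1} for all n ≥ 1. -/
/-!
Greedy algorithm: put `u₀ = A`, `aₙ = ⌊1/uₙ⌋ + 1` and `uₙ₊₁ = aₙ uₙ - 1`. Since `1 < aₙ uₙ ≤ 1 + uₙ`,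
the remainders stay in `(0, 1]` and decrease, so the digits are `≥ 2` and increase. The recurrence
telescopes to `A = ∑_{n<N} 1/(a₀⋯aₙ) + u_N/(a₀⋯a_{N-1})`, and the error term is at most `2^{-N}`.
-/

open Finset Filter

theorem sum_one_div_prod_add_div_prod_eq {K : Type*} [Field K] {a u : ℕ → K}
    (ha : ∀ n, a n ≠ 0) (hrec : ∀ n, u (n + 1) = a n * u n - 1) (N : ℕ) :
    ∑ n ∈ range N, 1 / ∏ k ∈ range (n + 1), a k + u N / ∏ k ∈ range N, a k = u 0 := by
  induction N with
  | zero => simp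
  | succ N ih =>
    have hP : ∏ k ∈ range N, a k ≠ 0 := prod_ne_zero_iff.mpr fun k _ => ha k
    rw [← ih, sum_range_succ, prod_range_succ, hrec]
    field_simp [ha N]
    ring

theorem hasSum_one_div_prod_of_recurrence {a u : ℕ → ℝ} (ha : ∀ n, 2 ≤ a n)
    (hu₀ : ∀ n, 0 ≤ u n) (hu₁ : ∀ n, u n ≤ 1) (hrec : ∀ n, u (n + 1) = a n * u n - 1) :
    HasSum (fun n => 1 / ∏ k ∈ range (n + 1), a k) (u 0) := by
  have ha₀ : ∀ n, 0 < a n := fun n => zero_lt_two.trans_le (ha n)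
  have hP : ∀ N, (2 : ℝ) ^ N ≤ ∏ k ∈ range N, a k := fun N => by
    simpa using prod_le_prod (s := range N) (fun _ _ => zero_le_two) fun k _ => ha k
  have herr : Tendsto (fun N => u N / ∏ k ∈ range N, a k) atTop (nhds 0) := by
    refine squeeze_zero (fun N => div_nonneg (hu₀ N) (prod_pos fun k _ => ha₀ k).le)
      (fun N => ?_)
      (tendsto_pow_atTop_nhds_zero_of_lt_one (by norm_num) (by norm_num : (1 / 2 : ℝ) < 1))
    rw [div_pow, one_pow]
    exact div_le_div₀ zero_le_one (hu₁ N) (by positivity) (hP N)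
  rw [hasSum_iff_tendsto_nat_of_nonneg fun n => (one_div_pos.mpr (prod_pos fun k _ => ha₀ k)).le]
  have hsum : ∀ N, ∑ n ∈ range N, 1 / ∏ k ∈ range (n + 1), a k
      = u 0 - u N / ∏ k ∈ range N, a k := fun N =>
    eq_sub_of_add_eq (sum_one_div_prod_add_div_prod_eq (fun n => (ha₀ n).ne') hrec N)
  simpa only [sub_zero, hsum] using herr.const_sub (u 0)

section GreedyEngel

noncomputable def engelDigit (x : ℝ) : ℤ := ⌊x⁻¹⌋ + 1

noncomputable def engelStep (x : ℝ) : ℝ := engelDigit x * x - 1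

variable {x y : ℝ}

theorem one_lt_engelDigit_mul (hx : 0 < x) : 1 < engelDigit x * x := by
  have h : x⁻¹ < engelDigit x := by
    unfold engelDigit; push_cast; exact Int.lt_floor_add_one _
  simpa [hx.ne'] using mul_lt_mul_of_pos_right h hx

theorem engelDigit_mul_le (hx : 0 < x) : engelDigit x * x ≤ 1 + x := by
  have h : (engelDigit x : ℝ) ≤ x⁻¹ + 1 := by
    unfold engelDigit; push_cast; linarith [Int.floor_le x⁻¹]
  simpa [add_mul, hx.ne'] using mul_le_mul_of_nonneg_right h hx.le

theorem engelStep_pos (hx : 0 < x) : 0 < engelStep x :=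
  sub_pos.mpr (one_lt_engelDigit_mul hx)

theorem engelStep_le (hx : 0 < x) : engelStep x ≤ x := by
  unfold engelStep
  linarith [engelDigit_mul_le hx]

theorem engelStep_iterate_pos (hx : 0 < x) (n : ℕ) : 0 < engelStep^[n] x := by
  induction n with
  | zero => exact hx
  | succ n ih => simpa only [Function.iterate_succ_apply'] using engelStep_pos ih

theorem engelStep_iterate_antitone (hx : 0 < x) : Antitone fun n => engelStep^[n] x :=
  antitone_nat_of_succ_le fun n => by
    simpa only [Function.iterate_succ_apply'] using engelStep_le (engelStep_iterate_pos hx n)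

theorem two_le_engelDigit (hx : 0 < x) (hx₁ : x ≤ 1) : 2 ≤ engelDigit x := by
  have : 1 ≤ ⌊x⁻¹⌋ := Int.le_floor.mpr (by simpa using one_le_inv₀ hx |>.mpr hx₁)
  unfold engelDigit
  omega

theorem engelDigit_le_engelDigit (hy : 0 < y) (hyx : y ≤ x) : engelDigit x ≤ engelDigit y := by
  unfold engelDigit
  gcongr

end GreedyEngel

theorem engel_expansion (A : ℝ) (h0 : 0 < A) (h1 : A ≤ 1) :
    ∃ a : ℕ → ℤ, (∀ n, 2 ≤ a n) ∧ (∀ n, a n ≤ a (n + 1)) ∧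
      HasSum (fun n : ℕ => 1 / ∏ k ∈ Finset.range (n + 1), (a k : ℝ)) A := by
  set u : ℕ → ℝ := fun n => engelStep^[n] A
  have hu_pos : ∀ n, 0 < u n := engelStep_iterate_pos h0
  have hu_anti : Antitone u := engelStep_iterate_antitone h0
  have hu_le : ∀ n, u n ≤ 1 := fun n => (hu_anti (Nat.zero_le n)).trans h1
  have ha : ∀ n, 2 ≤ engelDigit (u n) := fun n => two_le_engelDigit (hu_pos n) (hu_le n)
  refine ⟨fun n => engelDigit (u n), ha,
    fun n => engelDigit_le_engelDigit (hu_pos _) (hu_anti n.le_succ), ?_⟩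
  exact hasSum_one_div_prod_of_recurrence (fun n => by exact_mod_cast ha n)
    (fun n => (hu_pos n).le) hu_le fun n => Function.iterate_succ_apply' engelStep n A
end

section
/- Sylvester expansion: every real number A with 0 < A < 1 can be written as A = Σ_{n=1}^∞ 1/a_n where (a_n) is a sequence of integers with a_1 ≥ 2 and a_{n+1} ≥ a_n(a_n − 1) + 1 for all n ≥ 1. -/
/-!
Greedy algorithm: take for `a n` the least integer with `1 / a n` below the current remainder
`r n`. Minimality gives `r n ≤ 1 / (a n - 1)`, so the next remainder
`r (n + 1) = r n - 1 / a n` is at most `1 / (a n * (a n - 1))`, which forces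
`a (n + 1) ≥ a n * (a n - 1) + 1`. The remainders stay positive, so the partial sums are bounded
by `A`; hence `1 / a n → 0`, and since `r n ≤ 2 / a n` the remainders tend to `0` as well.
-/

open Filter Topology Finset

/-- The least integer `b` with `b⁻¹ < r`, for `0 < r`. -/
noncomputable def greedyDenom (r : ℝ) : ℤ := ⌊r⁻¹⌋ + 1

noncomputable def greedyRem (A : ℝ) : ℕ → ℝ
  | 0 => A
  | n + 1 => greedyRem A n - (greedyDenom (greedyRem A n) : ℝ)⁻¹

section greedyDenom

variable {r : ℝ}

lemma inv_lt_greedyDenom (r : ℝ) : r⁻¹ < greedyDenom r := by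
  unfold greedyDenom; push_cast; exact Int.lt_floor_add_one _

lemma greedyDenom_sub_one_le_inv (r : ℝ) : (greedyDenom r : ℝ) - 1 ≤ r⁻¹ := by
  unfold greedyDenom; push_cast; linarith [Int.floor_le r⁻¹]

lemma add_one_le_greedyDenom {m : ℤ} (h : (m : ℝ) ≤ r⁻¹) : m + 1 ≤ greedyDenom r := by
  have := Int.le_floor.mpr h
  unfold greedyDenom; omega

lemma two_le_greedyDenom (h0 : 0 < r) (h1 : r ≤ 1) : 2 ≤ greedyDenom r :=
  add_one_le_greedyDenom (m := 1) (by exact_mod_cast (one_le_inv₀ h0).mpr h1)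

lemma two_le_greedyDenom_cast (h0 : 0 < r) (h1 : r ≤ 1) : (2 : ℝ) ≤ greedyDenom r := by
  exact_mod_cast two_le_greedyDenom h0 h1

lemma inv_greedyDenom_lt (h0 : 0 < r) : (greedyDenom r : ℝ)⁻¹ < r :=
  inv_lt_of_inv_lt₀ h0 (inv_lt_greedyDenom r)

lemma le_inv_greedyDenom_sub_one (h0 : 0 < r) (h1 : r ≤ 1) :
    r ≤ ((greedyDenom r : ℝ) - 1)⁻¹ := by
  have hb := two_le_greedyDenom_cast h0 h1
  exact (le_inv_comm₀ h0 (by linarith)).mpr (greedyDenom_sub_one_le_inv r)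

lemma le_two_mul_inv_greedyDenom (h0 : 0 < r) (h1 : r ≤ 1) :
    r ≤ 2 * (greedyDenom r : ℝ)⁻¹ := by
  have hb := two_le_greedyDenom_cast h0 h1
  calc r ≤ ((greedyDenom r : ℝ) - 1)⁻¹ := le_inv_greedyDenom_sub_one h0 h1
    _ ≤ 2 * (greedyDenom r : ℝ)⁻¹ := by
      rw [← div_eq_mul_inv, inv_eq_one_div, div_le_div_iff₀ (by linarith) (by linarith)]
      linarith

lemma sub_inv_greedyDenom_le (h0 : 0 < r) (h1 : r ≤ 1) :
    r - (greedyDenom r : ℝ)⁻¹ ≤ ((greedyDenom r : ℝ) * (greedyDenom r - 1))⁻¹ := by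
  have hb := two_le_greedyDenom_cast h0 h1
  have hsplit : ((greedyDenom r : ℝ) - 1)⁻¹ - (greedyDenom r : ℝ)⁻¹ =
      ((greedyDenom r : ℝ) * (greedyDenom r - 1))⁻¹ := by
    field_simp [show (greedyDenom r : ℝ) - 1 ≠ 0 by linarith]
    ring
  linarith [le_inv_greedyDenom_sub_one h0 h1]

lemma greedyDenom_mul_sub_one_add_one_le (h0 : 0 < r) (h1 : r ≤ 1) :
    greedyDenom r * (greedyDenom r - 1) + 1 ≤ greedyDenom (r - (greedyDenom r : ℝ)⁻¹) := by
  have hb := two_le_greedyDenom_cast h0 h1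
  have hpos : 0 < r - (greedyDenom r : ℝ)⁻¹ := sub_pos.mpr (inv_greedyDenom_lt h0)
  apply add_one_le_greedyDenom
  push_cast
  exact (le_inv_comm₀ hpos (mul_pos (by linarith) (by linarith))).mp (sub_inv_greedyDenom_le h0 h1)

end greedyDenom

section greedyRem

variable {A : ℝ}

lemma greedyRem_mem_Ioc (h0 : 0 < A) (h1 : A ≤ 1) (n : ℕ) : greedyRem A n ∈ Set.Ioc 0 1 := by
  induction n with
  | zero => exact ⟨h0, h1⟩
  | succ n ih =>
    have hinv := inv_greedyDenom_lt ih.1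
    have hb := two_le_greedyDenom_cast ih.1 ih.2
    have hinv_pos : (0 : ℝ) < (greedyDenom (greedyRem A n) : ℝ)⁻¹ := by positivity
    exact ⟨sub_pos.mpr hinv, by simp only [greedyRem]; linarith [ih.2]⟩

lemma sum_range_inv_greedyDenom (A : ℝ) (n : ℕ) :
    ∑ k ∈ range n, (greedyDenom (greedyRem A k) : ℝ)⁻¹ = A - greedyRem A n := by
  induction n with
  | zero => simp [greedyRem]
  | succ n ih => rw [sum_range_succ, ih, greedyRem]; ring

lemma hasSum_inv_greedyDenom (h0 : 0 < A) (h1 : A ≤ 1) :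
    HasSum (fun n => (greedyDenom (greedyRem A n) : ℝ)⁻¹) A := by
  have hrem := greedyRem_mem_Ioc h0 h1
  have hsummable : Summable fun n => (greedyDenom (greedyRem A n) : ℝ)⁻¹ := by
    refine summable_of_sum_range_le (c := A) (fun n => ?_) (fun n => ?_)
    · have := two_le_greedyDenom_cast (hrem n).1 (hrem n).2
      positivity
    · linarith [sum_range_inv_greedyDenom A n, (hrem n).1]
  have hrem_tendsto : Tendsto (greedyRem A) atTop (𝓝 0) := by
    refine squeeze_zero (fun n => (hrem n).1.le)
      (fun n => le_two_mul_inv_greedyDenom (hrem n).1 (hrem n).2) ?_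
    simpa using hsummable.tendsto_atTop_zero.const_mul 2
  rw [hsummable.hasSum_iff_tendsto_nat]
  simp only [sum_range_inv_greedyDenom]
  simpa using tendsto_const_nhds (x := A) |>.sub hrem_tendsto

end greedyRem

theorem sylvester_expansion (A : ℝ) (h0 : 0 < A) (h1 : A < 1) :
    ∃ a : ℕ → ℤ, 2 ≤ a 0 ∧ (∀ n, a n * (a n - 1) + 1 ≤ a (n + 1)) ∧
      HasSum (fun n : ℕ => 1 / (a n : ℝ)) A := by
  have hrem := greedyRem_mem_Ioc h0 h1.le
  refine ⟨fun n => greedyDenom (greedyRem A n), two_le_greedyDenom h0 h1.le,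
    fun n => greedyDenom_mul_sub_one_add_one_le (hrem n).1 (hrem n).2, ?_⟩
  simpa only [one_div] using hasSum_inv_greedyDenom h0 h1.le
end

section
/- Cantor product: every real number a > 1 can be written as the infinite product a = Π_{k=1}^∞ (1 + 1/a_k) where (a_k) is a sequence of positive integers with a_{k+1} ≥ a_k² for all k ≥ 1. -/
open Filter Finset Topology

/-!
Greedy expansion: given `r > 1`, take the least positive integer `k` with `1 + 1/k < r` and pass
to `r' = r / (1 + 1/k) > 1`. Minimality of `k` gives `(k - 1)(r - 1) ≤ 1`. Hence
`r' - 1 = (k(r - 1) - 1)/(k + 1) ≤ (r - 1)/2`, so the remainders tend to `1` and the partial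
products to `a`; and `(k² - 1)(r' - 1) = (k - 1)(k(r - 1) - 1) ≤ 1`, so the next digit is at
least `k²`.
-/

namespace CantorProduct

noncomputable def digit (r : ℝ) : ℕ := ⌊1 / (r - 1)⌋₊ + 1

noncomputable def next (r : ℝ) : ℝ := r / (1 + 1 / digit r)

lemma digit_pos (r : ℝ) : 0 < digit r := Nat.succ_pos _

lemma one_lt_digit_mul {r : ℝ} (hr : 1 < r) : 1 < (digit r : ℝ) * (r - 1) := by
  have h : 1 / (r - 1) < digit r := by
    simpa [digit] using Nat.lt_floor_add_one (1 / (r - 1))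
  rwa [div_lt_iff₀ (by linarith)] at h

lemma digit_sub_one_mul_le {r : ℝ} (hr : 1 < r) : ((digit r : ℝ) - 1) * (r - 1) ≤ 1 := by
  have h : ((digit r : ℝ) - 1) ≤ 1 / (r - 1) := by
    simpa [digit] using Nat.floor_le (one_div_pos.2 (sub_pos.2 hr)).le
  rwa [le_div_iff₀ (by linarith)] at h

lemma le_digit_of_sub_one_mul_le {r : ℝ} (hr : 1 < r) {n : ℕ} (h : ((n : ℝ) - 1) * (r - 1) ≤ 1) : n ≤ digit r := by
  rcases n with _ | m
  · exact Nat.zero_le _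
  · have hm : (m : ℝ) ≤ 1 / (r - 1) := by
      rw [le_div_iff₀ (by linarith)]
      simpa using h
    exact Nat.succ_le_succ (Nat.le_floor hm)

lemma next_sub_one (r : ℝ) :
    next r - 1 = ((digit r : ℝ) * (r - 1) - 1) / (digit r + 1) := by
  have hk : (digit r : ℝ) ≠ 0 := by exact_mod_cast (digit_pos r).ne'
  have hk1 : (digit r : ℝ) + 1 ≠ 0 := by positivity
  rw [next, eq_div_iff hk1]
  field_simp
  ring

lemma one_lt_next {r : ℝ} (hr : 1 < r) : 1 < next r := by
  have h := one_lt_digit_mul hr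
  have h' : 0 < next r - 1 := by rw [next_sub_one]; apply div_pos <;> linarith
  linarith

lemma next_sub_one_le_half {r : ℝ} (hr : 1 < r) : next r - 1 ≤ (r - 1) / 2 := by
  have hk : (1 : ℝ) ≤ digit r := by exact_mod_cast digit_pos r
  have h := digit_sub_one_mul_le hr
  calc next r - 1 = ((digit r : ℝ) * (r - 1) - 1) / (digit r + 1) := next_sub_one r
    _ ≤ (r - 1) / (digit r + 1) := by gcongr; linarith
    _ ≤ (r - 1) / 2 := by gcongr; linarith

lemma digit_sq_le_digit_next {r : ℝ} (hr : 1 < r) : digit r ^ 2 ≤ digit (next r) := by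
  apply le_digit_of_sub_one_mul_le (one_lt_next hr)
  have hk : (1 : ℝ) ≤ digit r := by exact_mod_cast digit_pos r
  set k : ℝ := (digit r : ℝ)
  have h := digit_sub_one_mul_le hr
  calc (((digit r ^ 2 : ℕ) : ℝ) - 1) * (next r - 1) = (k - 1) * (k * (r - 1) - 1) := by
        rw [next_sub_one]
        push_cast
        field_simp
        ring
    _ = k * ((k - 1) * (r - 1)) - (k - 1) := by ring
    _ ≤ k * 1 - (k - 1) := by gcongr
    _ = 1 := by ring

lemma prod_mul_iterate_next (a : ℝ) (N : ℕ) :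
    (∏ i ∈ range N, (1 + 1 / (digit (next^[i] a) : ℝ))) * next^[N] a = a := by
  induction N with
  | zero => simp
  | succ N ih =>
    have hk : (digit (next^[N] a) : ℝ) ≠ 0 := by exact_mod_cast (digit_pos _).ne'
    have hfac : (1 + 1 / (digit (next^[N] a) : ℝ)) ≠ 0 := by positivity
    rw [prod_range_succ, Function.iterate_succ_apply', next, mul_assoc,
      mul_div_cancel₀ _ hfac, ih]

lemma one_lt_iterate_next {a : ℝ} (ha : 1 < a) (n : ℕ) : 1 < next^[n] a := by
  induction n with
  | zero => exact ha
  | succ n ih => rw [Function.iterate_succ_apply']; exact one_lt_next ih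

lemma iterate_next_sub_one_le {a : ℝ} (ha : 1 < a) (n : ℕ) :
    next^[n] a - 1 ≤ (1 / 2) ^ n * (a - 1) := by
  induction n with
  | zero => simp
  | succ n ih =>
    rw [Function.iterate_succ_apply']
    calc next (next^[n] a) - 1 ≤ (next^[n] a - 1) / 2 :=
          next_sub_one_le_half (one_lt_iterate_next ha n)
      _ ≤ (1 / 2) ^ n * (a - 1) / 2 := by gcongr
      _ = (1 / 2) ^ (n + 1) * (a - 1) := by ring

lemma tendsto_iterate_next {a : ℝ} (ha : 1 < a) :
    Tendsto (fun n => next^[n] a) atTop (𝓝 1) := by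
  have hgeom : Tendsto (fun n : ℕ => (1 / 2 : ℝ) ^ n * (a - 1)) atTop (𝓝 0) := by
    simpa using (tendsto_pow_atTop_nhds_zero_of_lt_one (by norm_num : (0 : ℝ) ≤ 1 / 2)
      (by norm_num)).mul_const (a - 1)
  have h : Tendsto (fun n => next^[n] a - 1) atTop (𝓝 0) :=
    squeeze_zero (fun n => (sub_pos.2 (one_lt_iterate_next ha n)).le)
      (iterate_next_sub_one_le ha) hgeom
  simpa using h.add_const 1

end CantorProduct

open CantorProduct in
theorem cantor_product (a : ℝ) (ha : 1 < a) :
    ∃ k : ℕ → ℕ, (∀ n, 0 < k n) ∧ (∀ n, (k n) ^ 2 ≤ k (n + 1)) ∧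
      Filter.Tendsto (fun N => ∏ i ∈ Finset.range N, (1 + 1 / (k i : ℝ)))
        Filter.atTop (nhds a) := by
  refine ⟨fun n => digit (next^[n] a), fun n => digit_pos _, fun n => ?_, ?_⟩
  · dsimp only
    rw [Function.iterate_succ_apply']
    exact digit_sq_le_digit_next (one_lt_iterate_next ha n)
  · have hprod : ∀ N, ∏ i ∈ range N, (1 + 1 / (digit (next^[i] a) : ℝ)) = a / next^[N] a :=
      fun N => eq_div_of_mul_eq (by linarith [one_lt_iterate_next ha N])
        (prod_mul_iterate_next a N)
    have h := (tendsto_const_nhds (x := a)).div (tendsto_iterate_next ha) one_ne_zero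
    rw [div_one] at h
    simp only [hprod]
    exact h
end
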